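/- Replacing the last column: for the matrix G'_{n,α} with entries α^{|i-j|} and any vector x = (x_1,…,x_n)ᵀ, the determinant of the matrix obtained by replacing the last (n-th) column of G'_{n,α} by x equals (1-α²)^{n-2}·(x_n - α·x_{n-1}). -/

import Mathlib

/-!
Subtracting `α` times each row from the next, i.e. multiplying on the left by the unit lower
bidiagonal matrix with `-α` below the diagonal, does not change the determinant and turns the
matrix `(α ^ |i - j|)` into an upper triangular one with diagonal `1, 1 - α², …, 1 - α²`.
Replacing the last column keeps the product upper triangular, and its last diagonal entry
becomes `x_n - α x_{n-1}`.
-/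

open Matrix

namespace Matrix

variable {R n : Type*}

theorem IsUpperTriangular.updateCol_last [Zero R] {m : ℕ}
    {M : Matrix (Fin (m + 1)) (Fin (m + 1)) R} (h : M.IsUpperTriangular) (c : Fin (m + 1) → R) :
    (M.updateCol (Fin.last m) c).IsUpperTriangular := by
  intro i j (hji : j < i)
  rw [updateCol_ne (Fin.ne_last_of_lt hji)]
  exact h hji

/-- The Kac–Murdock–Szegő matrix, `G'_{m,α}` in the paper. -/
def kms [Monoid R] (α : R) (m : ℕ) : Matrix (Fin m) (Fin m) R :=
  of fun i j => α ^ ((i : ℤ) - j).natAbs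

def lowerBidiagonal [Zero R] [One R] (a : R) (m : ℕ) : Matrix (Fin m) (Fin m) R :=
  of fun i j => if i = j then 1 else if (i : ℕ) = j + 1 then a else 0

theorem lowerBidiagonal_isLowerTriangular [Zero R] [One R] (a : R) (m : ℕ) :
    (lowerBidiagonal a m).IsLowerTriangular := by
  intro i j (hij : (i : ℕ) < j)
  simp only [lowerBidiagonal, of_apply]
  rw [if_neg (by omega), if_neg (by omega)]

section Semiring

variable [Semiring R] {m : ℕ}

theorem lowerBidiagonal_mulVec_apply_zero (a : R) (v : Fin (m + 1) → R) :
    (lowerBidiagonal a (m + 1) *ᵥ v) 0 = v 0 := by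
  rw [mulVec, dotProduct, Fintype.sum_eq_single 0]
  · simp [lowerBidiagonal]
  · intro k hk
    simp [lowerBidiagonal, Ne.symm hk]

theorem lowerBidiagonal_mulVec_apply_succ (a : R) (v : Fin (m + 1) → R) (i : Fin m) :
    (lowerBidiagonal a (m + 1) *ᵥ v) i.succ = v i.succ + a * v i.castSucc := by
  rw [mulVec, dotProduct, Fintype.sum_eq_add i.succ i.castSucc Fin.castSucc_lt_succ.ne']
  · simp [lowerBidiagonal, Fin.castSucc_lt_succ.ne']
  · rintro k ⟨hk₁, hk₂⟩
    have h₁ : (k : ℕ) ≠ i + 1 := fun h => hk₁ (Fin.ext h)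
    have h₂ : (k : ℕ) ≠ i := fun h => hk₂ (Fin.ext h)
    simp only [lowerBidiagonal, of_apply, Fin.ext_iff, Fin.val_succ]
    rw [if_neg (by omega), if_neg (by omega), zero_mul]

theorem lowerBidiagonal_mul_apply_zero (a : R) (M : Matrix (Fin (m + 1)) n R) (j : n) :
    (lowerBidiagonal a (m + 1) * M) 0 j = M 0 j :=
  lowerBidiagonal_mulVec_apply_zero a (fun k => M k j)

theorem lowerBidiagonal_mul_apply_succ (a : R) (M : Matrix (Fin (m + 1)) n R) (i : Fin m)
    (j : n) : (lowerBidiagonal a (m + 1) * M) i.succ j = M i.succ j + a * M i.castSucc j :=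
  lowerBidiagonal_mulVec_apply_succ a (fun k => M k j) i

end Semiring

section CommRing

variable [CommRing R]

theorem det_lowerBidiagonal (a : R) (m : ℕ) : (lowerBidiagonal a m).det = 1 := by
  rw [det_of_isLowerTriangular _ (lowerBidiagonal_isLowerTriangular a m)]
  simp [lowerBidiagonal]

theorem lowerBidiagonal_mul_kms_apply_succ_of_le {m : ℕ} (α : R) {i : Fin m} {j : Fin (m + 1)}
    (hj : j ≤ i.castSucc) : (lowerBidiagonal (-α) (m + 1) * kms α (m + 1)) i.succ j = 0 := by
  have hj : (j : ℕ) ≤ i := hj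
  have e : (((i.succ : ℕ) : ℤ) - j).natAbs = ((i.castSucc : ℕ) - (j : ℤ)).natAbs + 1 := by
    simp only [Fin.val_succ, Fin.val_castSucc]; omega
  simp only [lowerBidiagonal_mul_apply_succ, kms, of_apply, e, pow_succ]
  ring

theorem lowerBidiagonal_mul_kms_apply_succ_self {m : ℕ} (α : R) (i : Fin m) :
    (lowerBidiagonal (-α) (m + 1) * kms α (m + 1)) i.succ i.succ = 1 - α ^ 2 := by
  have e : (((i.castSucc : ℕ) : ℤ) - (i.succ : ℕ)).natAbs = 1 := by
    simp only [Fin.val_succ, Fin.val_castSucc]; omega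
  simp only [lowerBidiagonal_mul_apply_succ, kms, of_apply, e, sub_self]
  ring

theorem lowerBidiagonal_mul_kms_isUpperTriangular (α : R) (m : ℕ) :
    (lowerBidiagonal (-α) m * kms α m).IsUpperTriangular := by
  rintro i j (hji : j < i)
  cases m with
  | zero => exact i.elim0
  | succ m =>
    obtain ⟨i, rfl⟩ := Fin.exists_succ_eq.2 (Fin.ne_zero_of_lt hji)
    exact lowerBidiagonal_mul_kms_apply_succ_of_le α (Fin.le_castSucc_iff.2 hji)

end CommRing

end Matrix

/-- Replacing the last column of `G'_{n,α}` (entries `α^{|i-j|}`, size `n ≥ 2`)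
by a vector `x` gives determinant `(1-α²)^{n-2}·(x_n - α·x_{n-1})`. -/
theorem det_update_last_column (n : ℕ) (α : ℝ)
    (G : Matrix (Fin (n + 2)) (Fin (n + 2)) ℝ)
    (hG : ∀ i j, G i j = α ^ ((i : ℤ) - (j : ℤ)).natAbs)
    (x : Fin (n + 2) → ℝ) :
    (G.updateCol (Fin.last (n + 1)) x).det =
      (1 - α ^ 2) ^ n * (x (Fin.last (n + 1)) - α * x ⟨n, by omega⟩) := by
  obtain rfl : G = kms α (n + 2) := ext hG
  set L := lowerBidiagonal (-α) (n + 2)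
  set U := (L * kms α (n + 2)).updateCol (Fin.last (n + 1)) (L *ᵥ x)
  have hU : U.IsUpperTriangular := (lowerBidiagonal_mul_kms_isUpperTriangular α _).updateCol_last _
  have hU_zero : U 0 0 = 1 := by simp [U, L, lowerBidiagonal_mul_apply_zero, kms]
  have hU_succ (i : Fin n) : U i.castSucc.succ i.castSucc.succ = 1 - α ^ 2 := by
    simp only [U]
    rw [updateCol_ne (Fin.succ_ne_last_of_lt i.castSucc_lt_last),
      lowerBidiagonal_mul_kms_apply_succ_self]
  have hU_last : U (Fin.last n).succ (Fin.last n).succ =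
      x (Fin.last (n + 1)) - α * x ⟨n, by omega⟩ := by
    simp only [U]
    rw [Fin.succ_last, updateCol_self, ← Fin.succ_last, lowerBidiagonal_mulVec_apply_succ,
      Fin.succ_last, neg_mul, ← sub_eq_add_neg]
    rfl
  calc _ = (L * (kms α (n + 2)).updateCol (Fin.last (n + 1)) x).det := by
        rw [det_mul, det_lowerBidiagonal, one_mul]
    _ = ∏ i, U i i := by rw [mul_updateCol, det_of_isUpperTriangular hU]
    _ = _ := by
        rw [Fin.prod_univ_succ, Fin.prod_univ_castSucc, hU_zero,
          Finset.prod_congr rfl fun i _ => hU_succ i, Finset.prod_const, Finset.card_univ,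
          Fintype.card_fin, hU_last, one_mul]
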